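/- Let ≤_P be a partial order on [n] and let γ and σ be permutations of [n]. Then for every map u : [n] → ℕ₊, #{f ∈ ℬ(P,γ) : |f(σ⁻¹(i))| = u(i) for all i ∈ [n]} = Σ_{w ∈ ℒ(P)} #{f ∈ ℬ(w,γ) : |f(σ⁻¹(i))| = u(i) for all i ∈ [n]}; that is, the enriched fundamental function in noncommuting variables satisfies K_{(P,γ,σ)} = Σ_{w ∈ ℒ(P)} K_{(w,γ,σ)}. -/

import Mathlib

/-- `σ` is a permutation of `[n] = {1,…,n}`: it fixes everything outside `[n]`. -/
def IsPermOn (n : ℕ) (σ : Equiv.Perm ℕ) : Prop :=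
  ∀ i, i ∉ Finset.Icc 1 n → σ i = i

/-- `w` is a linear extension of the partial order `r` on `[n]`. -/
def IsLinExt (n : ℕ) (r : ℕ → ℕ → Prop) (w : Equiv.Perm ℕ) : Prop :=
  IsPermOn n w ∧
    ∀ i ∈ Finset.Icc 1 n, ∀ j ∈ Finset.Icc 1 n, r (w i) (w j) → w i ≠ w j → i < j

/-- The enriched order on nonzero integers: `a ≺ b` iff `|a| < |b|`, or `|a| = |b|` and
`a < 0 < b` (so `−1 ≺ 1 ≺ −2 ≺ 2 ≺ ⋯`). -/
def enrLT (a b : ℤ) : Prop :=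
  a.natAbs < b.natAbs ∨ (a.natAbs = b.natAbs ∧ a < 0 ∧ 0 < b)

/-- The set `ℬ(P,γ)` of enriched `(P,γ)`-partitions for the order relation `r` on `[n]`:
maps `f : [n] → ℤ ∖ {0}` (normalized to `1` outside `[n]`) such that for distinct
`a ≤_P b`: `f a ≺ f b` or `f a = f b`, with `f a = f b > 0` implying `γ a < γ b`, and
`f a = f b < 0` implying `γ a > γ b`. -/
def EnrPart (n : ℕ) (r : ℕ → ℕ → Prop) (γ : Equiv.Perm ℕ) : Set (ℕ → ℤ) :=
  {f | (∀ j, j ∉ Finset.Icc 1 n → f j = 1) ∧ (∀ a ∈ Finset.Icc 1 n, f a ≠ 0) ∧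
    ∀ a ∈ Finset.Icc 1 n, ∀ b ∈ Finset.Icc 1 n, r a b → a ≠ b →
      (enrLT (f a) (f b) ∨ f a = f b) ∧
      (f a = f b → 0 < f a → γ a < γ b) ∧
      (f a = f b → f a < 0 → γ b < γ a)}

/-- The total order on `[n]` determined by a linear extension `w` (i.e. the chain
`w 1 < w 2 < ⋯ < w n`): `a ≤ b` iff `w⁻¹ a ≤ w⁻¹ b`. -/
def chainRel (w : Equiv.Perm ℕ) : ℕ → ℕ → Prop := fun a b => w.symm a ≤ w.symm b

/-! ### Auxiliary machinery -/

def myRank (x : ℤ) : ℕ := 2 * x.natAbs - (if x < 0 then 1 else 0)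

lemma myRank_lt_myRank {x y : ℤ} (hx : x ≠ 0) (hy : y ≠ 0) :
    myRank x < myRank y ↔ enrLT x y := by
  unfold myRank enrLT; split_ifs <;> omega

lemma myRank_inj {x y : ℤ} (hx : x ≠ 0) (hy : y ≠ 0) : myRank x = myRank y ↔ x = y := by
  unfold myRank; split_ifs <;> omega

/-- The sorting key. -/
def key (γ : Equiv.Perm ℕ) (f : ℕ → ℤ) (a : ℕ) : ℕ ×ₗ ℤ :=
  toLex (myRank (f a), if 0 < f a then (γ a : ℤ) else -(γ a : ℤ))

lemma key_lt_iff (γ : Equiv.Perm ℕ) (f : ℕ → ℤ) {a b : ℕ}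
    (ha : f a ≠ 0) (hb : f b ≠ 0) :
    key γ f a < key γ f b ↔
      ((enrLT (f a) (f b) ∨ f a = f b) ∧
       (f a = f b → 0 < f a → γ a < γ b) ∧
       (f a = f b → f a < 0 → γ b < γ a)) := by
  unfold key
  rw [Prod.Lex.lt_iff]
  simp only [ofLex_toLex]
  rw [myRank_lt_myRank ha hb, myRank_inj ha hb]
  have hAB : ((γ a : ℤ) < (γ b : ℤ)) ↔ γ a < γ b := by exact_mod_cast Iff.rfl
  have hBA : ((γ b : ℤ) < (γ a : ℤ)) ↔ γ b < γ a := by exact_mod_cast Iff.rfl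
  constructor
  · rintro (h | ⟨heq, h2⟩)
    · have hne : f a ≠ f b := by
        rcases h with h | ⟨h, hlt, hgt⟩
        · intro he; rw [he] at h; omega
        · intro he; omega
      exact ⟨Or.inl h, fun he _ => absurd he hne, fun he _ => absurd he hne⟩
    · refine ⟨Or.inr heq, ?_, ?_⟩
      · intro _ hpos
        rw [if_pos hpos, if_pos (heq ▸ hpos)] at h2
        exact hAB.mp h2
      · intro _ hneg
        rw [if_neg (by omega), if_neg (by rw [← heq]; omega)] at h2
        have : (γ b : ℤ) < γ a := by omega
        exact hBA.mp this
  · rintro ⟨h1 | h1, h2, h3⟩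
    · exact Or.inl h1
    · right
      refine ⟨h1, ?_⟩
      rcases lt_trichotomy (f a) 0 with hs | hs | hs
      · rw [if_neg (by omega), if_neg (by rw [← h1]; omega)]
        have := hBA.mpr (h3 h1 hs)
        omega
      · exact absurd hs ha
      · rw [if_pos hs, if_pos (h1 ▸ hs)]
        exact hAB.mpr (h2 h1 hs)

lemma key_injective (γ : Equiv.Perm ℕ) (f : ℕ → ℤ) (h0 : ∀ a, f a ≠ 0) :
    Function.Injective (key γ f) := by
  intro a b h
  unfold key at h
  have h' : (myRank (f a), if 0 < f a then (γ a : ℤ) else -(γ a : ℤ)) =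
      (myRank (f b), if 0 < f b then (γ b : ℤ) else -(γ b : ℤ)) := toLex.injective h
  have h1 : myRank (f a) = myRank (f b) := congrArg Prod.fst h'
  have h2 : (if 0 < f a then (γ a : ℤ) else -(γ a : ℤ)) =
      (if 0 < f b then (γ b : ℤ) else -(γ b : ℤ)) := congrArg Prod.snd h'
  have hfe : f a = f b := (myRank_inj (h0 a) (h0 b)).mp h1
  rw [hfe] at h2
  by_cases hp : 0 < f b
  · rw [if_pos hp, if_pos hp] at h2
    exact γ.injective (by exact_mod_cast h2)
  · rw [if_neg hp, if_neg hp] at h2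
    have : (γ a : ℤ) = γ b := by omega
    exact γ.injective (by exact_mod_cast this)

section SortPerm
variable (γ : Equiv.Perm ℕ) (f : ℕ → ℤ)

/-- tie-broken key, always injective -/
def key2 (a : ℕ) : (ℕ ×ₗ ℤ) ×ₗ ℕ := toLex (key γ f a, a)

lemma key2_injective : Function.Injective (key2 γ f) := by
  intro a b h
  exact congrArg Prod.snd (toLex.injective h)

instance : IsTrans ℕ (fun a b => key2 γ f a ≤ key2 γ f b) := ⟨fun _ _ _ => le_trans⟩
instance : Std.Antisymm (fun a b => key2 γ f a ≤ key2 γ f b) :=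
  ⟨fun _ _ h h' => key2_injective γ f (le_antisymm h h')⟩
instance : Std.Total (fun a b => key2 γ f a ≤ key2 γ f b) := ⟨fun a b => le_total _ _⟩

noncomputable instance : DecidableRel (fun a b => key2 γ f a ≤ key2 γ f b) :=
  Classical.decRel _

noncomputable def sortList (n : ℕ) : List ℕ :=
  Finset.sort (Finset.Icc 1 n) (fun a b => key2 γ f a ≤ key2 γ f b)

lemma sortList_length (n : ℕ) : (sortList γ f n).length = n := by
  rw [sortList, Finset.length_sort, Nat.card_Icc]; omega

lemma mem_sortList {n a : ℕ} : a ∈ sortList γ f n ↔ a ∈ Finset.Icc 1 n := Finset.mem_sort _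

lemma sortList_nodup (n : ℕ) : (sortList γ f n).Nodup := Finset.sort_nodup _ _

lemma sortList_key2_lt {n : ℕ} {i j : Fin (sortList γ f n).length} (hij : i < j) :
    key2 γ f ((sortList γ f n).get i) < key2 γ f ((sortList γ f n).get j) := by
  have h1 := (Finset.pairwise_sort (Finset.Icc 1 n)
    (fun a b => key2 γ f a ≤ key2 γ f b)).rel_get_of_lt hij
  have h2 : (sortList γ f n).get i ≠ (sortList γ f n).get j := fun h =>
    (ne_of_lt hij) (List.nodup_iff_injective_get.mp (sortList_nodup γ f n) h)
  exact lt_of_le_of_ne h1 (fun he => h2 (key2_injective γ f he))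

noncomputable def sortPerm (n : ℕ) : Equiv.Perm ℕ where
  toFun i := if h : i ∈ Finset.Icc 1 n then
      (sortList γ f n).get ⟨i - 1, by rw [sortList_length]; simp at h; omega⟩ else i
  invFun a := if a ∈ Finset.Icc 1 n then (sortList γ f n).idxOf a + 1 else a
  left_inv := by
    intro i
    by_cases h : i ∈ Finset.Icc 1 n
    · simp only [dif_pos h]
      set k : Fin (sortList γ f n).length := ⟨i - 1, by rw [sortList_length]; simp at h; omega⟩
      have hmem : (sortList γ f n).get k ∈ Finset.Icc 1 n :=
        (mem_sortList γ f).mp (List.get_mem _ k)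
      rw [if_pos hmem, List.get_idxOf (sortList_nodup γ f n)]
      simp at h
      simp [k]
      omega
    · simp only [dif_neg h, if_neg h]
  right_inv := by
    intro a
    by_cases h : a ∈ Finset.Icc 1 n
    · simp only [if_pos h]
      have hmem : a ∈ sortList γ f n := (mem_sortList γ f).mpr h
      have hlt : (sortList γ f n).idxOf a < (sortList γ f n).length :=
        List.idxOf_lt_length_iff.mpr hmem
      have h2 : (sortList γ f n).idxOf a + 1 ∈ Finset.Icc 1 n := by
        simp only [Finset.mem_Icc]
        rw [sortList_length] at hlt
        omega
      rw [dif_pos h2]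
      simp only [Nat.add_sub_cancel]
      exact List.idxOf_get hlt
    · simp only [if_neg h, dif_neg h]

lemma sortPerm_apply_of_not_mem {n i : ℕ} (h : i ∉ Finset.Icc 1 n) : sortPerm γ f n i = i := by
  simp only [sortPerm, Equiv.coe_fn_mk, dif_neg h]

lemma sortPerm_symm_apply {n a : ℕ} (h : a ∈ Finset.Icc 1 n) :
    (sortPerm γ f n).symm a = (sortList γ f n).idxOf a + 1 := by
  simp only [sortPerm, Equiv.coe_fn_symm_mk, if_pos h]

lemma key2_lt_iff_key_lt {a b : ℕ} (hinj : Function.Injective (key γ f)) :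
    key2 γ f a < key2 γ f b ↔ key γ f a < key γ f b := by
  unfold key2
  rw [Prod.Lex.lt_iff]
  constructor
  · rintro (h | ⟨h1, h2⟩)
    · exact h
    · exact absurd (hinj h1) (Nat.ne_of_lt h2)
  · exact Or.inl

lemma sortPerm_symm_lt_iff {n a b : ℕ} (hinj : Function.Injective (key γ f))
    (ha : a ∈ Finset.Icc 1 n) (hb : b ∈ Finset.Icc 1 n) :
    (sortPerm γ f n).symm a < (sortPerm γ f n).symm b ↔ key γ f a < key γ f b := by
  rw [sortPerm_symm_apply γ f ha, sortPerm_symm_apply γ f hb]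
  have hla : (sortList γ f n).idxOf a < (sortList γ f n).length :=
    List.idxOf_lt_length_iff.mpr ((mem_sortList γ f).mpr ha)
  have hlb : (sortList γ f n).idxOf b < (sortList γ f n).length :=
    List.idxOf_lt_length_iff.mpr ((mem_sortList γ f).mpr hb)
  have hga : (sortList γ f n).get ⟨_, hla⟩ = a := List.idxOf_get hla
  have hgb : (sortList γ f n).get ⟨_, hlb⟩ = b := List.idxOf_get hlb
  constructor
  · intro h
    have := sortList_key2_lt γ f (n := n) (i := ⟨_, hla⟩) (j := ⟨_, hlb⟩) (by
      simp only [Fin.mk_lt_mk]; omega)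
    rw [hga, hgb] at this
    exact (key2_lt_iff_key_lt γ f hinj).mp this
  · intro h
    rcases lt_trichotomy ((sortList γ f n).idxOf a) ((sortList γ f n).idxOf b)
      with hlt | heq | hgt
    · omega
    · exfalso
      have : a = b := by rw [← hga, ← hgb]; congr 1; exact Fin.ext heq
      rw [this] at h
      exact lt_irrefl _ h
    · exfalso
      have := sortList_key2_lt γ f (n := n) (i := ⟨_, hlb⟩) (j := ⟨_, hla⟩) (by
        simp only [Fin.mk_lt_mk]; omega)
      rw [hga, hgb] at this
      exact absurd ((key2_lt_iff_key_lt γ f hinj).mp this) (asymm h)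

end SortPerm

lemma IsPermOn.maps {n : ℕ} {w : Equiv.Perm ℕ} (hw : IsPermOn n w) {a : ℕ}
    (ha : a ∈ Finset.Icc 1 n) : w a ∈ Finset.Icc 1 n := by
  by_contra h
  have h1 : w (w a) = w a := hw _ h
  have h2 : w a = a := w.injective h1
  rw [h2] at h; exact h ha

lemma IsPermOn.symm {n : ℕ} {w : Equiv.Perm ℕ} (hw : IsPermOn n w) : IsPermOn n w.symm := by
  intro i hi
  have := hw i hi
  conv_lhs => rw [← this]
  exact w.symm_apply_apply i

lemma perm_rigid {n : ℕ} {v : Equiv.Perm ℕ} (hv : IsPermOn n v)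
    (hmono : ∀ a ∈ Finset.Icc 1 n, ∀ b ∈ Finset.Icc 1 n, a < b → v a < v b) : v = 1 := by
  have hsymmmono : ∀ a ∈ Finset.Icc 1 n, ∀ b ∈ Finset.Icc 1 n, a < b →
      v.symm a < v.symm b := by
    intro a ha b hb hab
    rcases lt_trichotomy (v.symm a) (v.symm b) with h | h | h
    · exact h
    · exact absurd (by rw [← v.apply_symm_apply a, ← v.apply_symm_apply b, h]) (ne_of_lt hab)
    · exfalso
      have := hmono _ (hv.symm.maps hb) _ (hv.symm.maps ha) h
      rw [v.apply_symm_apply, v.apply_symm_apply] at this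
      omega
  have hglobal : ∀ (w : Equiv.Perm ℕ), IsPermOn n w →
      (∀ a ∈ Finset.Icc 1 n, ∀ b ∈ Finset.Icc 1 n, a < b → w a < w b) →
      ∀ a ∈ Finset.Icc 1 n, a ≤ w a := by
    intro w hw hmono a
    induction a with
    | zero => intro h; simp at h
    | succ k ih =>
      intro ha
      rcases Nat.eq_or_lt_of_le (Finset.mem_Icc.mp ha).1 with h1 | h1
      · have := hw.maps ha
        simp only [Finset.mem_Icc] at this
        omega
      · have hk : k ∈ Finset.Icc 1 n := by
          simp only [Finset.mem_Icc] at ha ⊢; omega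
        have := ih hk
        have := hmono _ hk _ ha (by omega)
        omega
  apply Equiv.ext
  intro a
  by_cases ha : a ∈ Finset.Icc 1 n
  · have h1 := hglobal v hv hmono a ha
    have h2 := hglobal v.symm hv.symm hsymmmono (v a) (hv.maps ha)
    rw [v.symm_apply_apply] at h2
    simp only [Equiv.Perm.one_apply]
    omega
  · simpa using hv a ha

lemma finite_permOn (n : ℕ) : {w : Equiv.Perm ℕ | IsPermOn n w}.Finite := by
  haveI : Finite {x // x ∈ Finset.Icc 1 n} := inferInstanceAs (Finite ↥(Finset.Icc 1 n))
  apply Set.Finite.of_finite_image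
    (f := fun (w : Equiv.Perm ℕ) (a : {x // x ∈ Finset.Icc 1 n}) => w a.1)
  · apply Set.Finite.subset
      (Set.Finite.pi (fun _ : {x // x ∈ Finset.Icc 1 n} => Set.finite_Icc 1 n))
    rintro g ⟨w, hw, rfl⟩
    rw [Set.mem_univ_pi]
    intro a
    have := IsPermOn.maps hw a.2
    simpa [Set.mem_Icc] using Finset.mem_Icc.mp this
  · intro w hw w' hw' heq
    apply Equiv.ext; intro a
    by_cases ha : a ∈ Finset.Icc 1 n
    · exact congrFun heq ⟨a, ha⟩
    · rw [hw a ha, hw' a ha]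

lemma finite_absFixed (n : ℕ) (v : ℕ → ℕ) :
    {f : ℕ → ℤ | (∀ j, j ∉ Finset.Icc 1 n → f j = 1) ∧
      ∀ a ∈ Finset.Icc 1 n, (f a).natAbs = v a}.Finite := by
  haveI : Finite {x // x ∈ Finset.Icc 1 n} := inferInstanceAs (Finite ↥(Finset.Icc 1 n))
  apply Set.Finite.of_finite_image
    (f := fun (f : ℕ → ℤ) (a : {x // x ∈ Finset.Icc 1 n}) => f a.1)
  · apply Set.Finite.subset
      (Set.Finite.pi (fun a : {x // x ∈ Finset.Icc 1 n} =>
        Set.finite_Icc (-(v a.1) : ℤ) (v a.1)))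
    rintro g ⟨f, hf, rfl⟩
    rw [Set.mem_univ_pi]
    intro a
    have := hf.2 a.1 a.2
    simp only [Set.mem_Icc]
    omega
  · intro f hf f' hf' heq
    funext a
    by_cases ha : a ∈ Finset.Icc 1 n
    · exact congrFun heq ⟨a, ha⟩
    · rw [hf.1 a ha, hf'.1 a ha]

/-- The fundamental theorem of enriched `(P,γ)`-partitions in noncommuting variables:
for every `u : [n] → ℕ₊`, the number of enriched `(P,γ)`-partitions `f` with
`|f(σ⁻¹ i)| = u i` for all `i ∈ [n]` equals the sum over all linear extensions `w` of `P`
of the corresponding counts for the chain `w`; that is,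
`K_{(P,γ,σ)} = Σ_{w ∈ ℒ(P)} K_{(w,γ,σ)}`. -/

theorem stmt7 (n : ℕ) (hn : 1 ≤ n) (r : ℕ → ℕ → Prop)
    (hrefl : ∀ i ∈ Finset.Icc 1 n, r i i)
    (hantisymm : ∀ i ∈ Finset.Icc 1 n, ∀ j ∈ Finset.Icc 1 n, r i j → r j i → i = j)
    (htrans : ∀ i ∈ Finset.Icc 1 n, ∀ j ∈ Finset.Icc 1 n, ∀ k ∈ Finset.Icc 1 n,
      r i j → r j k → r i k)
    (γ σ : Equiv.Perm ℕ) (hγ : IsPermOn n γ) (hσ : IsPermOn n σ)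
    (u : ℕ → ℕ+) :
    Set.ncard {f ∈ EnrPart n r γ |
        ∀ i ∈ Finset.Icc 1 n, (f (σ.symm i)).natAbs = (u i : ℕ)} =
      ∑ᶠ w ∈ {w : Equiv.Perm ℕ | IsLinExt n r w},
        Set.ncard {f ∈ EnrPart n (chainRel w) γ |
          ∀ i ∈ Finset.Icc 1 n, (f (σ.symm i)).natAbs = (u i : ℕ)} := by
  classical
  let C : (ℕ → ℤ) → Prop := fun f => ∀ i ∈ Finset.Icc 1 n, (f (σ.symm i)).natAbs = (u i : ℕ)
  let S : Set (ℕ → ℤ) := {f ∈ EnrPart n r γ | C f}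
  let T : Equiv.Perm ℕ → Set (ℕ → ℤ) := fun w => {f ∈ EnrPart n (chainRel w) γ | C f}
  let L : Set (Equiv.Perm ℕ) := {w | IsLinExt n r w}
  show S.ncard = ∑ᶠ w ∈ L, (T w).ncard
  let F : Set (ℕ → ℤ) := {f | (∀ j, j ∉ Finset.Icc 1 n → f j = 1) ∧
      ∀ a ∈ Finset.Icc 1 n, (f a).natAbs = (u (σ a) : ℕ)}
  have hFfin : F.Finite := finite_absFixed n (fun a => (u (σ a) : ℕ))
  have h0 : ∀ f ∈ F, ∀ a, f a ≠ 0 := by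
    intro f hf a
    by_cases ha : a ∈ Finset.Icc 1 n
    · intro h
      have h1 := hf.2 a ha
      rw [h] at h1
      simp only [Int.natAbs_zero] at h1
      have := (u (σ a)).pos
      omega
    · rw [hf.1 a ha]; norm_num
  have hCF : ∀ f, (∀ j, j ∉ Finset.Icc 1 n → f j = 1) → C f → f ∈ F := by
    intro f hsup hC
    refine ⟨hsup, fun a ha => ?_⟩
    have hσa : σ a ∈ Finset.Icc 1 n := IsPermOn.maps hσ ha
    have := hC (σ a) hσa
    rwa [Equiv.symm_apply_apply] at this
  have hS_F : S ⊆ F := fun f hf => hCF f hf.1.1 hf.2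
  have hT_F : ∀ w, T w ⊆ F := fun w f hf => hCF f hf.1.1 hf.2
  have hinj : ∀ f ∈ F, Function.Injective (key γ f) := fun f hf => key_injective γ f (h0 f hf)
  have hA : ∀ f ∈ S, sortPerm γ f n ∈ L ∧ f ∈ T (sortPerm γ f n) := by
    intro f hf
    have hfF := hS_F hf
    have h0f := h0 f hfF
    have hinjf := hinj f hfF
    have hwOn : IsPermOn n (sortPerm γ f n) := fun i hi => sortPerm_apply_of_not_mem γ f hi
    obtain ⟨⟨hsup, hnz, hcond⟩, hCf⟩ := hf
    constructor
    · refine ⟨hwOn, ?_⟩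
      intro i hi j hj hr hne
      have hwi := IsPermOn.maps hwOn hi
      have hwj := IsPermOn.maps hwOn hj
      have hkey : key γ f (sortPerm γ f n i) < key γ f (sortPerm γ f n j) :=
        (key_lt_iff γ f (h0f _) (h0f _)).mpr (hcond _ hwi _ hwj hr hne)
      have := (sortPerm_symm_lt_iff γ f hinjf hwi hwj).mpr hkey
      rwa [Equiv.symm_apply_apply, Equiv.symm_apply_apply] at this
    · refine ⟨⟨hsup, hnz, ?_⟩, hCf⟩
      intro a ha b hb hcr hne
      have hlt : (sortPerm γ f n).symm a < (sortPerm γ f n).symm b := by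
        rcases lt_or_eq_of_le hcr with h | h
        · exact h
        · exact absurd ((sortPerm γ f n).symm.injective h) hne
      exact (key_lt_iff γ f (h0f a) (h0f b)).mp
        ((sortPerm_symm_lt_iff γ f hinjf ha hb).mp hlt)
  have hB : ∀ w ∈ L, T w ⊆ S := by
    intro w hw f hf
    obtain ⟨⟨hsup, hnz, hcond⟩, hCf⟩ := hf
    refine ⟨⟨hsup, hnz, ?_⟩, hCf⟩
    intro a ha b hb hr hne
    have hia : w.symm a ∈ Finset.Icc 1 n := IsPermOn.maps (IsPermOn.symm hw.1) ha
    have hib : w.symm b ∈ Finset.Icc 1 n := IsPermOn.maps (IsPermOn.symm hw.1) hb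
    have hr' : r (w (w.symm a)) (w (w.symm b)) := by
      rwa [Equiv.apply_symm_apply, Equiv.apply_symm_apply]
    have hne' : w (w.symm a) ≠ w (w.symm b) := by
      rwa [Equiv.apply_symm_apply, Equiv.apply_symm_apply]
    have := hw.2 _ hia _ hib hr' hne'
    exact hcond a ha b hb (le_of_lt this) hne
  have hiff : ∀ w ∈ L, ∀ f ∈ T w, ∀ a ∈ Finset.Icc 1 n, ∀ b ∈ Finset.Icc 1 n,
      (w.symm a < w.symm b ↔ key γ f a < key γ f b) := by
    intro w hw f hf
    have hfF := hT_F w hf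
    have h0f := h0 f hfF
    obtain ⟨⟨hsup, hnz, hcond⟩, hCf⟩ := hf
    have fwd : ∀ a ∈ Finset.Icc 1 n, ∀ b ∈ Finset.Icc 1 n,
        w.symm a < w.symm b → key γ f a < key γ f b := by
      intro a ha b hb hlt
      have hne : a ≠ b := fun h => by rw [h] at hlt; exact lt_irrefl _ hlt
      exact (key_lt_iff γ f (h0f a) (h0f b)).mpr (hcond a ha b hb (le_of_lt hlt) hne)
    intro a ha b hb
    refine ⟨fwd a ha b hb, fun hk => ?_⟩
    rcases lt_trichotomy (w.symm a) (w.symm b) with h | h | h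
    · exact h
    · exfalso
      have : a = b := w.symm.injective h
      rw [this] at hk; exact lt_irrefl _ hk
    · exact absurd (fwd b hb a ha h) (asymm hk)
  have hC2 : ∀ w ∈ L, ∀ w' ∈ L, ∀ f, f ∈ T w → f ∈ T w' → w = w' := by
    intro w hw w' hw' f hfw hfw'
    have hvOn : IsPermOn n (w.trans w'.symm) := by
      intro i hi
      simp only [Equiv.trans_apply]
      rw [hw.1 i hi, (IsPermOn.symm hw'.1) i hi]
    have hveq : w.trans w'.symm = 1 := by
      apply perm_rigid hvOn
      intro i hi j hj hij
      simp only [Equiv.trans_apply]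
      have hwi := IsPermOn.maps hw.1 hi
      have hwj := IsPermOn.maps hw.1 hj
      have h1 : w.symm (w i) < w.symm (w j) := by
        rw [Equiv.symm_apply_apply, Equiv.symm_apply_apply]; exact hij
      have hk := (hiff w hw f hfw _ hwi _ hwj).mp h1
      exact (hiff w' hw' f hfw' _ hwi _ hwj).mpr hk
    apply Equiv.ext
    intro x
    have hx := Equiv.ext_iff.mp hveq x
    simp only [Equiv.trans_apply, Equiv.Perm.one_apply] at hx
    calc w x = w' (w'.symm (w x)) := (w'.apply_symm_apply _).symm
    _ = w' x := by rw [hx]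
  have hSU : S = ⋃ w ∈ L, T w := by
    ext f
    simp only [Set.mem_iUnion, exists_prop]
    constructor
    · intro hf
      exact ⟨sortPerm γ f n, (hA f hf).1, (hA f hf).2⟩
    · rintro ⟨w, hwL, hfT⟩
      exact hB w hwL hfT
  have hLfin : L.Finite := (finite_permOn n).subset (fun w hw => hw.1)
  have hTfin : ∀ w, (T w).Finite := fun w => hFfin.subset (hT_F w)
  have hSfin : S.Finite := hFfin.subset hS_F
  have step1 : ∑ᶠ w ∈ L, (T w).ncard = ∑ w ∈ hLfin.toFinset, (T w).ncard := by
    conv_lhs => rw [← hLfin.coe_toFinset]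
    exact finsum_mem_coe_finset _ _
  rw [step1, Set.ncard_eq_toFinset_card S hSfin]
  have hbi : hSfin.toFinset = hLfin.toFinset.biUnion (fun w => (hTfin w).toFinset) := by
    ext f
    simp only [Set.Finite.mem_toFinset, Finset.mem_biUnion]
    rw [hSU]
    simp only [Set.mem_iUnion, exists_prop]
  rw [hbi, Finset.card_biUnion]
  · apply Finset.sum_congr rfl
    intro w hw
    exact ((Set.ncard_eq_toFinset_card _ (hTfin w))).symm
  · intro w hw w' hw' hne
    rw [Function.onFun, Finset.disjoint_left]
    intro f hf hf'
    rw [Set.Finite.mem_toFinset] at hf hf'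
    exact hne (hC2 w (hLfin.mem_toFinset.mp hw) w' (hLfin.mem_toFinset.mp hw') f hf hf')
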